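/- If (R,B,L) is a Hadamard triple, then for every k ≥ 1, the triple (R^k, B_k, L_k^T) is a Hadamard triple, where B_k = B + RB + ⋯ + R^{k-1}B and L_k^T = L + R^T L + ⋯ + (R^T)^{k-1}L. -/

import Mathlib

open scoped BigOperators ENNReal
open Matrix MeasureTheory

noncomputable section

/-- Cast of an integer matrix to a real matrix. -/
def mR {d : ℕ} (R : Matrix (Fin d) (Fin d) ℤ) : Matrix (Fin d) (Fin d) ℝ :=
  R.map (Int.cast : ℤ → ℝ)

/-- Cast of an integer vector to a real vector. -/
def vR {d : ℕ} (b : Fin d → ℤ) : Fin d → ℝ := fun i => (b i : ℝ)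

/-- The standard inner product on ℝ^d. -/
def ip {d : ℕ} (x y : Fin d → ℝ) : ℝ := ∑ i, x i * y i

/-- A matrix is expansive if all of its complex eigenvalues have modulus > 1. -/
def Expansive {d : ℕ} (R : Matrix (Fin d) (Fin d) ℤ) : Prop :=
  ∀ z ∈ spectrum ℂ (R.map (Int.cast : ℤ → ℂ)), 1 < ‖z‖

/-- The matrix H = (1/√N)[e^{2πi⟨S⁻¹ a, ℓ⟩}]_{ℓ ∈ L, a ∈ A}. -/
def hMatrix {d : ℕ} (S : Matrix (Fin d) (Fin d) ℤ) (A L : Finset (Fin d → ℤ)) :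
    Matrix L A ℂ := fun ℓ a =>
  ((1 / Real.sqrt (A.card) : ℝ) : ℂ) *
    Complex.exp (2 * (Real.pi : ℂ) * Complex.I *
      ((ip ((mR S)⁻¹.mulVec (vR (a : Fin d → ℤ))) (vR (ℓ : Fin d → ℤ)) : ℝ) : ℂ))

/-- (S, A, L) is a Hadamard triple: #A = #L and the matrix H is unitary (H* H = 1). -/
def IsHadamardTriple {d : ℕ} (S : Matrix (Fin d) (Fin d) ℤ) (A L : Finset (Fin d → ℤ)) : Prop :=
  A.card = L.card ∧ (hMatrix S A L)ᴴ * hMatrix S A L = 1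

/-- B is a simple digit set for R: distinct elements are incongruent mod R(ℤ^d). -/
def SimpleDigits {d : ℕ} (R : Matrix (Fin d) (Fin d) ℤ) (B : Finset (Fin d → ℤ)) : Prop :=
  ∀ b ∈ B, ∀ b' ∈ B, (∃ k : Fin d → ℤ, b - b' = R.mulVec k) → b = b'

/-- Bb is a complete set of representatives modulo R(ℤ^d). -/
def CompleteResidues {d : ℕ} (R : Matrix (Fin d) (Fin d) ℤ) (Bb : Finset (Fin d → ℤ)) : Prop :=
  SimpleDigits R Bb ∧ ∀ x : Fin d → ℤ, ∃ b ∈ Bb, ∃ k : Fin d → ℤ, x = b + R.mulVec k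

/-- B_k = B + RB + ⋯ + R^{k-1}B. -/
def Bk {d : ℕ} (R : Matrix (Fin d) (Fin d) ℤ) (B : Finset (Fin d → ℤ)) (k : ℕ) :
    Finset (Fin d → ℤ) :=
  (Fintype.piFinset (fun _ : Fin k => B)).image
    (fun b => ∑ j : Fin k, (R ^ (j : ℕ)).mulVec (b j))

/-- The element of B_n associated to a word b ∈ B^n. -/
def beta {d : ℕ} (R : Matrix (Fin d) (Fin d) ℤ) {n : ℕ} (b : Fin n → (Fin d → ℤ)) :
    Fin d → ℤ := ∑ j : Fin n, (R ^ (j : ℕ)).mulVec (b j)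

/-- τ_b(x) = R⁻¹(x + b). -/
def tau {d : ℕ} (R : Matrix (Fin d) (Fin d) ℤ) (b : Fin d → ℤ) (x : Fin d → ℝ) : Fin d → ℝ :=
  (mR R)⁻¹.mulVec (x + vR b)

/-- τ at level n: x ↦ R^{-n}(x + b); the composition τ_{b_1}∘⋯∘τ_{b_n} equals
`tauN R n (beta R b)` under the identification of words with digits in B_n. -/
def tauN {d : ℕ} (R : Matrix (Fin d) (Fin d) ℤ) (n : ℕ) (b : Fin d → ℤ) (x : Fin d → ℝ) :
    Fin d → ℝ := ((mR R) ^ n)⁻¹.mulVec (x + vR b)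

/-- T is the attractor T(R,B): the (unique) nonempty compact set with T = ⋃_b τ_b(T). -/
def IsAttractor {d : ℕ} (R : Matrix (Fin d) (Fin d) ℤ) (B : Finset (Fin d → ℤ))
    (T : Set (Fin d → ℝ)) : Prop :=
  T.Nonempty ∧ IsCompact T ∧ T = ⋃ b ∈ B, tau R b '' T

/-- μ is the equal-weight self-affine measure: μ = (1/N) Σ_b μ ∘ τ_b⁻¹. -/
def IsSelfAffine {d : ℕ} (R : Matrix (Fin d) (Fin d) ℤ) (B : Finset (Fin d → ℤ))
    (μ : Measure (Fin d → ℝ)) : Prop :=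
  μ = (B.card : ℝ≥0∞)⁻¹ • ∑ b ∈ B, μ.map (tau R b)

/-- The no-overlap condition. -/
def NoOverlap {d : ℕ} (R : Matrix (Fin d) (Fin d) ℤ) (B : Finset (Fin d → ℤ))
    (μ : Measure (Fin d → ℝ)) (T : Set (Fin d → ℝ)) : Prop :=
  ∀ b ∈ B, ∀ b' ∈ B, b ≠ b' → μ (tau R b '' T ∩ tau R b' '' T) = 0

/-- The Fourier transform μ̂(ξ) = ∫ e^{-2πi⟨ξ,x⟩} dμ(x). -/
def ft {d : ℕ} (μ : Measure (Fin d → ℝ)) (ξ : Fin d → ℝ) : ℂ :=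
  ∫ x, Complex.exp (-(2 * (Real.pi : ℂ) * Complex.I * ((ip ξ x : ℝ) : ℂ))) ∂μ

/-- M_B(ξ) = (1/N) Σ_{b∈B} e^{-2πi⟨b,ξ⟩}. -/
def maskB {d : ℕ} (B : Finset (Fin d → ℤ)) (ξ : Fin d → ℝ) : ℂ :=
  (B.card : ℂ)⁻¹ *
    ∑ b ∈ B, Complex.exp (-(2 * (Real.pi : ℂ) * Complex.I * ((ip (vR b) ξ : ℝ) : ℂ)))

/-- M_{B_n}(ξ) = (1/N^n) Σ_{b∈B_n} e^{-2πi⟨b,ξ⟩} (summed over words). -/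
def maskBn {d : ℕ} (R : Matrix (Fin d) (Fin d) ℤ) (B : Finset (Fin d → ℤ)) (n : ℕ)
    (ξ : Fin d → ℝ) : ℂ :=
  ((B.card : ℂ) ^ n)⁻¹ * ∑ b ∈ Fintype.piFinset (fun _ : Fin n => B),
    Complex.exp (-(2 * (Real.pi : ℂ) * Complex.I * ((ip (vR (beta R b)) ξ : ℝ) : ℂ)))

/-- u_B(x) = |(1/N) Σ_{b∈B} e^{2πi⟨b,x⟩}|². -/
def uB {d : ℕ} (B : Finset (Fin d → ℤ)) (x : Fin d → ℝ) : ℝ :=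
  ‖(B.card : ℂ)⁻¹ *
    ∑ b ∈ B, Complex.exp (2 * (Real.pi : ℂ) * Complex.I * ((ip (vR b) x : ℝ) : ℂ))‖ ^ 2

/-- Σ_{λ∈J} |N^{-n/2} Σ_{b∈B_n} w_b e^{-2πi⟨R^{-n}b,λ⟩}|². -/
def frameSum {d : ℕ} (R : Matrix (Fin d) (Fin d) ℤ) (B : Finset (Fin d → ℤ)) (n : ℕ)
    (J : Finset (Fin d → ℤ)) (w : (Fin d → ℤ) → ℂ) : ℝ :=
  ∑ lam ∈ J, ‖((1 / Real.sqrt ((B.card : ℝ) ^ n) : ℝ) : ℂ) *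
    ∑ b ∈ Bk R B n, w b * Complex.exp (-(2 * (Real.pi : ℂ) * Complex.I *
      ((ip (((mR R) ^ n)⁻¹.mulVec (vR b)) (vR lam) : ℝ) : ℂ)))‖ ^ 2

/-- The almost-Parseval-frame inequality at level n with constant ε and frequency set J. -/
def APF {d : ℕ} (R : Matrix (Fin d) (Fin d) ℤ) (B : Finset (Fin d → ℤ)) (n : ℕ)
    (J : Finset (Fin d → ℤ)) (ε : ℝ) : Prop :=
  ∀ w : (Fin d → ℤ) → ℂ,
    (1 - ε) * (∑ b ∈ Bk R B n, ‖w b‖ ^ 2) ≤ frameSum R B n J w ∧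
    frameSum R B n J w ≤ (1 + ε) * (∑ b ∈ Bk R B n, ‖w b‖ ^ 2)

/-!
Write `e(t) = exp(2πit)`. A triple `(S, A, L)` is Hadamard iff `#A = #L` and
`∑_{ℓ ∈ L} e(⟨S⁻¹(a' - a), ℓ⟩) = 0` for distinct `a, a' ∈ A`. Since `R^{k+1} = R R^k`,
`B_{k+1} = B + R B_k` and `L_{k+1} = L_k + (Rᵀ)^k L`, it suffices that Hadamard triples
`(R, B, L)` and `(S, C, M)` compose to `(RS, B + RC, M + SᵀL)`. For `a = b + Rc` and
`λ = m + Sᵀℓ` the phase `⟨(RS)⁻¹a, λ⟩` is `⟨S⁻¹(R⁻¹b + c), m⟩ + ⟨R⁻¹b, ℓ⟩` modulo `ℤ`, so each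
column sum is an `M`-sum times an `L`-sum: the `L`-sum vanishes when the `B`-digits differ, the
`M`-sum when they agree. Both Minkowski sums are direct, with `#B #C = #L #M` elements, because
`B` is a simple digit set for `R` and `M` one for `Sᵀ`: two digits congruent modulo the matrix
would give two equal columns (resp. rows) of the unitary matrix.
-/

open Finset

def expTwoPiI (t : ℝ) : ℂ := Complex.exp (2 * (Real.pi : ℂ) * Complex.I * (t : ℂ))

lemma expTwoPiI_add (s t : ℝ) : expTwoPiI (s + t) = expTwoPiI s * expTwoPiI t := by
  rw [expTwoPiI, expTwoPiI, expTwoPiI, ← Complex.exp_add]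
  congr 1
  push_cast
  ring

lemma expTwoPiI_zero : expTwoPiI 0 = 1 := by simp [expTwoPiI]

lemma expTwoPiI_intCast (n : ℤ) : expTwoPiI n = 1 := by
  rw [expTwoPiI, ← Complex.exp_int_mul_two_pi_mul_I n]
  congr 1
  push_cast
  ring

lemma star_expTwoPiI (t : ℝ) : star (expTwoPiI t) = expTwoPiI (-t) := by
  rw [expTwoPiI, expTwoPiI, Complex.star_def, ← Complex.exp_conj]
  congr 1
  simp only [map_mul, Complex.conj_ofReal, Complex.conj_I, map_ofNat]
  push_cast
  ring

section

variable {d : ℕ}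

lemma vR_zero : vR (0 : Fin d → ℤ) = 0 := by
  funext i; simp [vR]

lemma vR_add (x y : Fin d → ℤ) : vR (x + y) = vR x + vR y := by
  funext i; simp [vR]

lemma vR_sub (x y : Fin d → ℤ) : vR (x - y) = vR x - vR y := by
  funext i; simp [vR]

lemma vR_mulVec (M : Matrix (Fin d) (Fin d) ℤ) (v : Fin d → ℤ) :
    vR (M *ᵥ v) = mR M *ᵥ vR v := by
  funext i; simp [vR, mR, mulVec, dotProduct]

lemma mR_mul (M N : Matrix (Fin d) (Fin d) ℤ) : mR (M * N) = mR M * mR N :=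
  (Int.castRingHom ℝ).mapMatrix.map_mul M N

lemma mR_transpose (M : Matrix (Fin d) (Fin d) ℤ) : mR Mᵀ = (mR M)ᵀ := rfl

lemma det_mR (M : Matrix (Fin d) (Fin d) ℤ) : (mR M).det = M.det :=
  (RingHom.map_det (Int.castRingHom ℝ) M).symm

lemma ip_eq_dotProduct (x y : Fin d → ℝ) : ip x y = x ⬝ᵥ y := rfl

lemma dotProduct_vR_vR (x y : Fin d → ℤ) : vR x ⬝ᵥ vR y = ((x ⬝ᵥ y : ℤ) : ℝ) := by
  simp [vR, dotProduct]

section Determinant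

variable {R : Matrix (Fin d) (Fin d) ℤ}

lemma Expansive.det_ne_zero (hR : Expansive R) : R.det ≠ 0 := by
  intro h0
  have hsing : ¬IsUnit (R.map (Int.cast : ℤ → ℂ)) := by
    rw [isUnit_iff_isUnit_det, show R.map (Int.cast : ℤ → ℂ) = (Int.castRingHom ℂ).mapMatrix R
      from rfl, ← RingHom.map_det, h0, map_zero]
    exact not_isUnit_zero
  exact absurd (hR 0 (spectrum.zero_mem_iff ℂ |>.mpr hsing)) (by norm_num)

lemma inv_mR_mulVec_vR_mulVec (hR : R.det ≠ 0) (v : Fin d → ℤ) :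
    (mR R)⁻¹ *ᵥ vR (R *ᵥ v) = vR v := by
  rw [vR_mulVec, mulVec_mulVec, nonsing_inv_mul _ (by simpa [det_mR] using hR), one_mulVec]

lemma mR_mulVec_inv_mR_mulVec (hR : R.det ≠ 0) (x : Fin d → ℝ) :
    mR R *ᵥ ((mR R)⁻¹ *ᵥ x) = x := by
  rw [mulVec_mulVec, mul_nonsing_inv _ (by simpa [det_mR] using hR), one_mulVec]

end Determinant

def phaseSum (L : Finset (Fin d → ℤ)) (x : Fin d → ℝ) : ℂ :=
  ∑ ℓ ∈ L, expTwoPiI (ip x (vR ℓ))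

lemma phaseSum_zero (L : Finset (Fin d → ℤ)) : phaseSum L 0 = L.card := by
  simp [phaseSum, ip, expTwoPiI_zero]

lemma phaseSum_add_vR (L : Finset (Fin d → ℤ)) (x : Fin d → ℝ) (v : Fin d → ℤ) :
    phaseSum L (x + vR v) = phaseSum L x := by
  refine sum_congr rfl fun ℓ _ => ?_
  rw [ip_eq_dotProduct, ip_eq_dotProduct, add_dotProduct, dotProduct_vR_vR, expTwoPiI_add,
    expTwoPiI_intCast, mul_one]

section Hadamard

variable {S : Matrix (Fin d) (Fin d) ℤ} {A L : Finset (Fin d → ℤ)}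

lemma hMatrix_apply (ℓ : L) (a : A) :
    hMatrix S A L ℓ a =
      ((1 / Real.sqrt A.card : ℝ) : ℂ) * expTwoPiI (ip ((mR S)⁻¹ *ᵥ vR a) (vR ℓ)) :=
  rfl

lemma conjTranspose_hMatrix_mul_apply (a a' : A) :
    ((hMatrix S A L)ᴴ * hMatrix S A L) a a' =
      (A.card : ℂ)⁻¹ * phaseSum L ((mR S)⁻¹ *ᵥ vR (a' - a)) := by
  have hc : ((1 / Real.sqrt A.card : ℝ) : ℂ) ^ 2 = (A.card : ℂ)⁻¹ := by
    rw [← Complex.ofReal_pow, div_pow, Real.sq_sqrt (Nat.cast_nonneg _)]; simp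
  rw [mul_apply, phaseSum, ← sum_coe_sort L, mul_sum]
  refine sum_congr rfl fun ℓ _ => ?_
  rw [conjTranspose_apply, hMatrix_apply, hMatrix_apply, star_mul', star_expTwoPiI,
    Complex.star_def, Complex.conj_ofReal, ← hc, vR_sub, mulVec_sub]
  simp only [ip_eq_dotProduct, sub_dotProduct]
  rw [sub_eq_neg_add, expTwoPiI_add]
  ring

theorem isHadamardTriple_iff :
    IsHadamardTriple S A L ↔ A.card = L.card ∧
      ∀ a ∈ A, ∀ a' ∈ A, a ≠ a' → phaseSum L ((mR S)⁻¹ *ᵥ vR (a' - a)) = 0 := by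
  refine and_congr_right fun hcard => ?_
  rw [← Matrix.ext_iff]
  simp only [conjTranspose_hMatrix_mul_apply, Subtype.forall]
  refine forall₂_congr fun a ha => forall₂_congr fun a' ha' => ?_
  have hA : (A.card : ℂ) ≠ 0 := Nat.cast_ne_zero.mpr (card_ne_zero_of_mem ha)
  by_cases haa : a = a'
  · subst haa
    rw [one_apply_eq, sub_self, vR_zero, mulVec_zero, phaseSum_zero, ← hcard, inv_mul_cancel₀ hA]
    simp
  · rw [one_apply_ne (by simpa using haa)]
    simp [haa, hA]

theorem isHadamardTriple_singleton (S : Matrix (Fin d) (Fin d) ℤ) (a ℓ : Fin d → ℤ) :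
    IsHadamardTriple S {a} {ℓ} :=
  isHadamardTriple_iff.mpr ⟨rfl, by simp⟩

theorem IsHadamardTriple.simpleDigits (h : IsHadamardTriple S A L) (hS : S.det ≠ 0) :
    SimpleDigits S A := by
  rintro a ha a' ha' ⟨k, hk⟩
  by_contra hne
  have hzero := (isHadamardTriple_iff.mp h).2 a' ha' a ha (Ne.symm hne)
  rw [hk, inv_mR_mulVec_vR_mulVec hS, ← zero_add (vR k), phaseSum_add_vR, phaseSum_zero,
    Nat.cast_eq_zero, ← h.1] at hzero
  exact card_ne_zero_of_mem ha hzero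

lemma hMatrix_transpose (hcard : A.card = L.card) : hMatrix Sᵀ L A = (hMatrix S A L)ᵀ := by
  ext a ℓ
  rw [transpose_apply, hMatrix_apply, hMatrix_apply, hcard, mR_transpose,
    ← transpose_nonsing_inv, ip_eq_dotProduct, ip_eq_dotProduct, mulVec_transpose,
    ← dotProduct_mulVec, dotProduct_comm]

theorem IsHadamardTriple.transpose (h : IsHadamardTriple S A L) : IsHadamardTriple Sᵀ L A := by
  have hunitary : hMatrix S A L * (hMatrix S A L)ᴴ = 1 :=
    (mul_eq_one_comm_of_card_eq _ _ _ (by simp [h.1])).mp h.2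
  refine ⟨h.1.symm, ?_⟩
  rw [hMatrix_transpose h.1, conjTranspose_transpose_eq_transpose_conjTranspose,
    ← transpose_mul, hunitary, transpose_one]

end Hadamard

section DigitSum

variable {R : Matrix (Fin d) (Fin d) ℤ}

def digitSum (R : Matrix (Fin d) (Fin d) ℤ) (B C : Finset (Fin d → ℤ)) : Finset (Fin d → ℤ) :=
  (B ×ˢ C).image fun p => p.1 + R *ᵥ p.2

lemma SimpleDigits.injOn_digitSum {B : Finset (Fin d → ℤ)} (hB : SimpleDigits R B)
    (hR : R.det ≠ 0) (C : Finset (Fin d → ℤ)) :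
    Set.InjOn (fun p : (Fin d → ℤ) × (Fin d → ℤ) => p.1 + R *ᵥ p.2) ↑(B ×ˢ C) := by
  rintro ⟨b, c⟩ hbc ⟨b', c'⟩ hbc' heq
  simp only [coe_product, Set.mem_prod, mem_coe] at hbc hbc' heq
  have hb : b = b' := hB b hbc.1 b' hbc'.1 ⟨c' - c, by rw [mulVec_sub]; linear_combination heq⟩
  subst hb
  exact Prod.ext rfl (mulVec_injective_of_det_ne_zero hR (add_left_cancel heq))

lemma SimpleDigits.card_digitSum {B : Finset (Fin d → ℤ)} (hB : SimpleDigits R B)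
    (hR : R.det ≠ 0) (C : Finset (Fin d → ℤ)) :
    (digitSum R B C).card = B.card * C.card := by
  rw [digitSum, card_image_of_injOn (hB.injOn_digitSum hR C), card_product]

lemma phaseSum_digitSum {M L : Finset (Fin d → ℤ)}
    (hinj : Set.InjOn (fun p : (Fin d → ℤ) × (Fin d → ℤ) => p.1 + R *ᵥ p.2) ↑(M ×ˢ L))
    (x : Fin d → ℝ) :
    phaseSum (digitSum R M L) x = phaseSum M x * phaseSum L ((mR R)ᵀ *ᵥ x) := by
  rw [phaseSum, digitSum, sum_image hinj, sum_product, phaseSum, phaseSum, sum_mul_sum]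
  refine sum_congr rfl fun m _ => sum_congr rfl fun ℓ _ => ?_
  simp only [ip_eq_dotProduct]
  rw [vR_add, vR_mulVec, dotProduct_add, dotProduct_mulVec, ← mulVec_transpose, expTwoPiI_add]

end DigitSum

section Tower

variable {R S : Matrix (Fin d) (Fin d) ℤ} {B C L M : Finset (Fin d → ℤ)}

lemma inv_mR_mul_mulVec_vR (hR : R.det ≠ 0) (u v : Fin d → ℤ) :
    (mR (R * S))⁻¹ *ᵥ vR (u + R *ᵥ v) = (mR S)⁻¹ *ᵥ ((mR R)⁻¹ *ᵥ vR u + vR v) := by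
  rw [mR_mul, Matrix.mul_inv_rev, ← mulVec_mulVec, vR_add, mulVec_add (mR R)⁻¹,
    inv_mR_mulVec_vR_mulVec hR]

theorem IsHadamardTriple.mul (h₁ : IsHadamardTriple R B L) (h₂ : IsHadamardTriple S C M)
    (hR : R.det ≠ 0) (hS : S.det ≠ 0) :
    IsHadamardTriple (R * S) (digitSum R B C) (digitSum Sᵀ M L) := by
  have hSt : Sᵀ.det ≠ 0 := by rwa [det_transpose]
  have hB := h₁.simpleDigits hR
  have hM := h₂.transpose.simpleDigits hSt
  rw [isHadamardTriple_iff] at h₁ h₂ ⊢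
  refine ⟨by rw [hB.card_digitSum hR, hM.card_digitSum hSt, h₁.1, h₂.1, mul_comm], ?_⟩
  simp only [digitSum, mem_image, mem_product]
  rintro _ ⟨⟨b, c⟩, ⟨hb, hc⟩, rfl⟩ _ ⟨⟨b', c'⟩, ⟨hb', hc'⟩, rfl⟩ hne
  rw [← digitSum, phaseSum_digitSum (hM.injOn_digitSum hSt L), add_sub_add_comm, ← mulVec_sub,
    inv_mR_mul_mulVec_vR hR, mR_transpose, transpose_transpose, mR_mulVec_inv_mR_mulVec hS,
    phaseSum_add_vR]
  by_cases hbb : b = b'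
  · subst hbb
    rw [sub_self, vR_zero, mulVec_zero, zero_add,
      h₂.2 c hc c' hc' fun hcc => hne (by rw [hcc]), zero_mul]
  · rw [h₁.2 b hb b' hb' hbb, mul_zero]

end Tower

section Powers

variable (R : Matrix (Fin d) (Fin d) ℤ) (B : Finset (Fin d → ℤ))

lemma Bk_eq_image_beta (k : ℕ) :
    Bk R B k = (Fintype.piFinset fun _ : Fin k => B).image (beta R) :=
  rfl

lemma Bk_zero : Bk R B 0 = {0} := by
  ext x; simp [Bk]

lemma beta_succ {n : ℕ} (b : Fin (n + 1) → Fin d → ℤ) :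
    beta R b = b 0 + R *ᵥ beta R (Fin.tail b) := by
  simp only [beta, Fin.sum_univ_succ, Fin.val_zero, pow_zero, one_mulVec, mulVec_sum,
    mulVec_mulVec, Fin.val_succ, pow_succ', Fin.tail]

lemma beta_succ_last {n : ℕ} (b : Fin (n + 1) → Fin d → ℤ) :
    beta R b = beta R (Fin.init b) + (R ^ n) *ᵥ b (Fin.last n) := by
  simp only [beta, Fin.sum_univ_castSucc, Fin.val_castSucc, Fin.val_last, Fin.init]

lemma Bk_succ (k : ℕ) : Bk R B (k + 1) = digitSum R B (Bk R B k) := by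
  ext x
  simp only [Bk_eq_image_beta, digitSum, mem_image, mem_product, Fintype.mem_piFinset,
    Prod.exists]
  constructor
  · rintro ⟨b, hb, rfl⟩
    exact ⟨b 0, _, ⟨hb 0, Fin.tail b, fun j => hb j.succ, rfl⟩, (beta_succ R b).symm⟩
  · rintro ⟨b₀, _, ⟨hb₀, b, hb, rfl⟩, rfl⟩
    refine ⟨Fin.cons b₀ b, Fin.cases hb₀ hb, ?_⟩
    simpa using beta_succ R (Fin.cons b₀ b)

lemma Bk_succ_last (k : ℕ) : Bk R B (k + 1) = digitSum (R ^ k) (Bk R B k) B := by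
  ext x
  simp only [Bk_eq_image_beta, digitSum, mem_image, mem_product, Fintype.mem_piFinset,
    Prod.exists]
  constructor
  · rintro ⟨b, hb, rfl⟩
    exact ⟨_, b (Fin.last k), ⟨⟨Fin.init b, fun j => hb j.castSucc, rfl⟩, hb _⟩,
      (beta_succ_last R b).symm⟩
  · rintro ⟨_, b₀, ⟨⟨b, hb, rfl⟩, hb₀⟩, rfl⟩
    refine ⟨Fin.snoc b b₀, fun j => ?_, by simpa using beta_succ_last R (Fin.snoc b b₀)⟩
    induction j using Fin.lastCases <;> simp [hb₀, hb]

variable {R B}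

theorem IsHadamardTriple.pow {L : Finset (Fin d → ℤ)} (h : IsHadamardTriple R B L)
    (hR : R.det ≠ 0) : ∀ k, IsHadamardTriple (R ^ k) (Bk R B k) (Bk Rᵀ L k)
  | 0 => by
    rw [pow_zero, Bk_zero, Bk_zero]
    exact isHadamardTriple_singleton 1 0 0
  | k + 1 => by
    rw [pow_succ', Bk_succ, Bk_succ_last, ← transpose_pow]
    exact h.mul (h.pow hR k) hR (by rw [det_pow]; exact pow_ne_zero k hR)

end Powers

end

/-- powers of a Hadamard triple are Hadamard triples. -/
theorem hadamard_triple_pow {d : ℕ} (R : Matrix (Fin d) (Fin d) ℤ)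
    (hR : Expansive R) (B L : Finset (Fin d → ℤ))
    (h : IsHadamardTriple R B L) :
    ∀ k : ℕ, 1 ≤ k → IsHadamardTriple (R ^ k) (Bk R B k) (Bk Rᵀ L k) :=
  fun k _ => h.pow hR.det_ne_zero k
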